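/- arXiv:2012.03605 — 9 statements merged into one kernel-verified Lean document; each statement's English description precedes it below -/
import Mathlib

section
/- Let α, β, T, t₂ ∈ ℝ with β < α and 0 < t₂ < T. Let u : [0,T] → ℝ be absolutely continuous, monotonically increasing on [0,t₂], monotonically decreasing on [t₂,T], with u(0) = u(T) < β and u(t₂) > α. Define y : [0,T] → ℝ by y(t) = 1 if (t ≤ t₂ and u(t) > α) or (t > t₂ and u(t) ≥ β), and y(t) = −1 otherwise. Then the signed area of the resulting input–output loop satisfies −∫₀ᵀ y(t)·u'(t) dt = 2(α − β). -/
open MeasureTheory Topology Filter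

lemma relay_piece_eq {y u' : ℝ → ℝ} {a b c : ℝ} (hab : a ≤ b)
    (hint : IntervalIntegrable u' volume a b)
    (hyc : ∀ t ∈ Set.Ioo a b, y t = c) :
    IntervalIntegrable (fun t => y t * u' t) volume a b ∧
    ∫ t in a..b, y t * u' t = c * ∫ t in a..b, u' t := by
  have hae : (fun t => y t * u' t) =ᵐ[volume.restrict (Set.Ioc a b)] (fun t => c * u' t) := by
    have h1 : ∀ᵐ t ∂volume.restrict (Set.Ioc a b), t ∈ Set.Ioc a b :=
      ae_restrict_mem measurableSet_Ioc
    have h2 : ∀ᵐ t ∂volume.restrict (Set.Ioc a b), t ≠ b := by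
      refine ae_restrict_of_ae ?_
      simp [ae_iff, Real.volume_singleton]
    filter_upwards [h1, h2] with t ht htb
    rw [hyc t ⟨ht.1, lt_of_le_of_ne ht.2 htb⟩]
  have hci : IntervalIntegrable (fun t => c * u' t) volume a b := hint.const_mul c
  constructor
  · rw [intervalIntegrable_iff_integrableOn_Ioc_of_le hab] at hci ⊢
    exact hci.congr hae.symm
  · rw [intervalIntegral.integral_of_le hab, intervalIntegral.integral_of_le hab]
    rw [integral_congr_ae hae]
    simp [MeasureTheory.integral_const_mul]

theorem relay_loop_signed_area
    (α β T t₂ : ℝ) (hβα : β < α) (ht₂pos : 0 < t₂) (ht₂T : t₂ < T)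
    (u u' : ℝ → ℝ)
    (hu'int : IntervalIntegrable u' volume 0 T)
    (hFTC : ∀ t ∈ Set.Icc (0 : ℝ) T, u t = u 0 + ∫ s in (0 : ℝ)..t, u' s)
    (hmono : MonotoneOn u (Set.Icc 0 t₂))
    (hanti : AntitoneOn u (Set.Icc t₂ T))
    (hper : u 0 = u T) (hlow : u 0 < β) (hhigh : α < u t₂)
    (y : ℝ → ℝ)
    (hy : ∀ t, y t =
      if (t ≤ t₂ ∧ α < u t) ∨ (t₂ < t ∧ β ≤ u t) then (1 : ℝ) else -1) :
    -∫ t in (0 : ℝ)..T, y t * u' t = 2 * (α - β) := by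
  have hT : (0:ℝ) ≤ T := le_of_lt (ht₂pos.trans ht₂T)
  -- continuity of u on [0, T]
  have hcont : ContinuousOn u (Set.Icc 0 T) := by
    have h1 : ContinuousOn (fun t => u 0 + ∫ s in (0:ℝ)..t, u' s) (Set.Icc 0 T) := by
      have := intervalIntegral.continuousOn_primitive_interval' hu'int Set.left_mem_uIcc
      rw [Set.uIcc_of_le hT] at this
      exact continuousOn_const.add this
    exact h1.congr fun t ht => hFTC t ht
  -- integrability on subintervals
  have hint : ∀ a b : ℝ, 0 ≤ a → a ≤ b → b ≤ T → IntervalIntegrable u' volume a b := by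
    intro a b ha hab hbT
    refine hu'int.mono_set ?_
    rw [Set.uIcc_of_le hab, Set.uIcc_of_le hT]
    exact Set.Icc_subset_Icc ha hbT
  -- FTC for subintervals
  have hFTCab : ∀ a ∈ Set.Icc (0:ℝ) T, ∀ b ∈ Set.Icc (0:ℝ) T, a ≤ b →
      ∫ t in a..b, u' t = u b - u a := by
    intro a ha b hb hab
    have hia : IntervalIntegrable u' volume 0 a := hint 0 a le_rfl ha.1 ha.2
    have hib : IntervalIntegrable u' volume 0 b := hint 0 b le_rfl hb.1 hb.2
    have hkey := intervalIntegral.integral_interval_sub_left hib hia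
    have h1 := hFTC a ha
    have h2 := hFTC b hb
    rw [← hkey]; linarith
  -- the first switching time t₁
  set S₁ : Set ℝ := {t | t ∈ Set.Icc 0 t₂ ∧ u t ≤ α} with hS₁def
  have hS₁ne : S₁.Nonempty := ⟨0, ⟨le_rfl, le_of_lt ht₂pos⟩, le_of_lt (hlow.trans hβα)⟩
  have hS₁bdd : BddAbove S₁ := ⟨t₂, fun t ht => ht.1.2⟩
  have hS₁closed : IsClosed S₁ := by
    have : S₁ = Set.Icc 0 t₂ ∩ u ⁻¹' (Set.Iic α) := by
      ext t; simp [hS₁def, Set.mem_sep_iff]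
    rw [this]
    exact (hcont.mono (Set.Icc_subset_Icc le_rfl (le_of_lt ht₂T))).preimage_isClosed_of_isClosed
      isClosed_Icc isClosed_Iic
  set t₁ := sSup S₁ with ht₁def
  have ht₁mem : t₁ ∈ S₁ := hS₁closed.csSup_mem hS₁ne hS₁bdd
  have ht₁Icc : t₁ ∈ Set.Icc (0:ℝ) t₂ := ht₁mem.1
  have ht₁α : u t₁ ≤ α := ht₁mem.2
  have ht₁t₂ : t₁ < t₂ := lt_of_le_of_ne ht₁Icc.2 (fun h => absurd hhigh (by rw [← h]; linarith))
  have ht₁0T : t₁ ∈ Set.Icc (0:ℝ) T := ⟨ht₁Icc.1, le_trans ht₁Icc.2 (le_of_lt ht₂T)⟩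
  have hgtα : ∀ t ∈ Set.Ioo t₁ t₂, α < u t := by
    intro t ht
    by_contra h
    push_neg at h
    have : t ∈ S₁ := ⟨⟨le_trans ht₁Icc.1 ht.1.le, ht.2.le⟩, h⟩
    exact absurd (le_csSup hS₁bdd this) (not_le.mpr ht.1)
  have hut₁ : u t₁ = α := by
    refine le_antisymm ht₁α ?_
    have hne : (𝓝[Set.Ioo t₁ t₂] t₁).NeBot := left_nhdsWithin_Ioo_neBot ht₁t₂
    have htend : Filter.Tendsto u (𝓝[Set.Ioo t₁ t₂] t₁) (𝓝 (u t₁)) :=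
      (hcont t₁ ht₁0T).mono (fun t ht => ⟨le_trans ht₁Icc.1 ht.1.le,
        le_trans ht.2.le (le_of_lt ht₂T)⟩)
    exact ge_of_tendsto htend (Filter.eventually_of_mem self_mem_nhdsWithin
      fun t ht => (hgtα t ht).le)
  -- the second switching time t₃
  set S₃ : Set ℝ := {t | t ∈ Set.Icc t₂ T ∧ β ≤ u t} with hS₃def
  have hS₃ne : S₃.Nonempty := ⟨t₂, ⟨le_rfl, le_of_lt ht₂T⟩, le_of_lt (hβα.trans hhigh)⟩
  have hS₃bdd : BddAbove S₃ := ⟨T, fun t ht => ht.1.2⟩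
  have hS₃closed : IsClosed S₃ := by
    have : S₃ = Set.Icc t₂ T ∩ u ⁻¹' (Set.Ici β) := by
      ext t; simp [hS₃def, Set.mem_sep_iff]
    rw [this]
    exact (hcont.mono (Set.Icc_subset_Icc (le_of_lt ht₂pos) le_rfl)).preimage_isClosed_of_isClosed
      isClosed_Icc isClosed_Ici
  set t₃ := sSup S₃ with ht₃def
  have ht₃mem : t₃ ∈ S₃ := hS₃closed.csSup_mem hS₃ne hS₃bdd
  have ht₃Icc : t₃ ∈ Set.Icc t₂ T := ht₃mem.1
  have ht₃β : β ≤ u t₃ := ht₃mem.2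
  have huT : u T < β := by rw [← hper]; exact hlow
  have ht₃T : t₃ < T := lt_of_le_of_ne ht₃Icc.2 (fun h => absurd ht₃β (by rw [h]; linarith))
  have ht₃0T : t₃ ∈ Set.Icc (0:ℝ) T := ⟨le_trans (le_of_lt ht₂pos) ht₃Icc.1, ht₃Icc.2⟩
  have hltβ : ∀ t ∈ Set.Ioo t₃ T, u t < β := by
    intro t ht
    by_contra h
    push_neg at h
    have : t ∈ S₃ := ⟨⟨le_trans ht₃Icc.1 ht.1.le, ht.2.le⟩, h⟩
    exact absurd (le_csSup hS₃bdd this) (not_le.mpr ht.1)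
  have hut₃ : u t₃ = β := by
    refine le_antisymm ?_ ht₃β
    have hne : (𝓝[Set.Ioo t₃ T] t₃).NeBot := left_nhdsWithin_Ioo_neBot ht₃T
    have htend : Filter.Tendsto u (𝓝[Set.Ioo t₃ T] t₃) (𝓝 (u t₃)) :=
      (hcont t₃ ht₃0T).mono (fun t ht => ⟨le_trans ht₃0T.1 ht.1.le, ht.2.le⟩)
    exact le_of_tendsto htend (Filter.eventually_of_mem self_mem_nhdsWithin
      fun t ht => (hltβ t ht).le)
  -- values of y on the four open intervals
  have hy1 : ∀ t ∈ Set.Ioo (0:ℝ) t₁, y t = -1 := by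
    intro t ht
    have huα : u t ≤ α := by
      obtain ⟨s, hs, hts⟩ := exists_lt_of_lt_csSup hS₁ne ht.2
      exact le_trans (hmono ⟨ht.1.le, le_trans hts.le hs.1.2⟩ hs.1 hts.le) hs.2
    rw [hy t, if_neg]
    rintro (⟨_, h⟩ | ⟨h, _⟩)
    · linarith
    · linarith [ht.2, ht₁t₂]
  have hy2 : ∀ t ∈ Set.Ioo t₁ t₂, y t = 1 := by
    intro t ht
    rw [hy t, if_pos (Or.inl ⟨ht.2.le, hgtα t ht⟩)]
  have hy3 : ∀ t ∈ Set.Ioo t₂ t₃, y t = 1 := by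
    intro t ht
    have : β ≤ u t :=
      le_trans ht₃β (hanti ⟨ht.1.le, le_trans ht.2.le ht₃Icc.2⟩ ht₃Icc ht.2.le)
    rw [hy t, if_pos (Or.inr ⟨ht.1, this⟩)]
  have hy4 : ∀ t ∈ Set.Ioo t₃ T, y t = -1 := by
    intro t ht
    have h1 : ¬ t ≤ t₂ := not_le.mpr (lt_of_le_of_lt ht₃Icc.1 ht.1)
    have h2 : ¬ β ≤ u t := not_le.mpr (hltβ t ht)
    rw [hy t, if_neg]
    rintro (⟨h, _⟩ | ⟨_, h⟩)
    · exact h1 h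
    · exact h2 h
  -- the four pieces
  have hi1 := hint 0 t₁ le_rfl ht₁Icc.1 ht₁0T.2
  have hi2 := hint t₁ t₂ ht₁Icc.1 ht₁Icc.2 (le_of_lt ht₂T)
  have hi3 := hint t₂ t₃ (le_of_lt ht₂pos) ht₃Icc.1 ht₃Icc.2
  have hi4 := hint t₃ T ht₃0T.1 ht₃0T.2 le_rfl
  obtain ⟨hI1, hE1⟩ := relay_piece_eq ht₁Icc.1 hi1 hy1
  obtain ⟨hI2, hE2⟩ := relay_piece_eq ht₁Icc.2 hi2 hy2
  obtain ⟨hI3, hE3⟩ := relay_piece_eq ht₃Icc.1 hi3 hy3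
  obtain ⟨hI4, hE4⟩ := relay_piece_eq ht₃0T.2 hi4 hy4
  have h34 := intervalIntegral.integral_add_adjacent_intervals hI3 hI4
  have h234 := intervalIntegral.integral_add_adjacent_intervals hI2 (hI3.trans hI4)
  have h1234 := intervalIntegral.integral_add_adjacent_intervals hI1 ((hI2.trans hI3).trans hI4)
  have hF1 := hFTCab 0 ⟨le_rfl, hT⟩ t₁ ht₁0T ht₁Icc.1
  have hF2 := hFTCab t₁ ht₁0T t₂ ⟨le_of_lt ht₂pos, le_of_lt ht₂T⟩ ht₁Icc.2
  have hF3 := hFTCab t₂ ⟨le_of_lt ht₂pos, le_of_lt ht₂T⟩ t₃ ht₃0T ht₃Icc.1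
  have hF4 := hFTCab t₃ ht₃0T T ⟨hT, le_rfl⟩ ht₃0T.2
  have hIt2t4 : (hI2.trans hI3).trans hI4 = hI2.trans (hI3.trans hI4) := rfl
  rw [← h1234, ← h234, ← h34, hE1, hE2, hE3, hE4, hF1, hF2, hF3, hF4, hut₁, hut₃]
  linarith [hper]
end

section
/- Let b₀ ≤ a₀ be reals and let μ : ℝ² → ℝ be integrable on T(b₀,a₀). Then ∫_{b₀}^{a₀} ( f⁻(v) − f⁺(v) ) dv = 2 ∬_{T(b₀,a₀)} μ(α,β)·(α − β) dα dβ. Consequently, the signed area enclosed by the major hysteresis loop of the Preisach operator with weighting μ generated by a periodic input with minimum b₀ and maximum a₀ equals 2 ∬_{T(b₀,a₀)} μ(α,β)(α−β) dα dβ, and this loop has zero signed area if and only if ∬_{T(b₀,a₀)} μ(α,β)(α−β) dα dβ = 0. -/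
/-!
STATEMENT 1: The signed area of the major hysteresis loop of the Preisach
operator with weighting μ over the input range [b₀, a₀] equals
2 ∬_{T(b₀,a₀)} μ(α,β)(α−β) dα dβ, and it is zero iff that double integral is zero.
-/

open MeasureTheory

/-- The triangular subregion `T(b₀,a₀) = {(α,β) : b₀ ≤ β ≤ α ≤ a₀}` of the
Preisach plane (points are `p = (α, β)`). -/
def preisachTriangle (b₀ a₀ : ℝ) : Set (ℝ × ℝ) :=
  {p : ℝ × ℝ | b₀ ≤ p.2 ∧ p.2 ≤ p.1 ∧ p.1 ≤ a₀}

/-- Ascending branch of the Preisach operator with weighting `μ` over the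
input range `[b₀, a₀]`: relays with `α < v` are `+1`, the rest are `−1`. -/
noncomputable def ascendingBranch (μ : ℝ × ℝ → ℝ) (b₀ a₀ v : ℝ) : ℝ :=
  ∫ p in preisachTriangle b₀ a₀, μ p * (if p.1 < v then (1 : ℝ) else -1)

/-- Descending branch of the Preisach operator with weighting `μ` over the
input range `[b₀, a₀]`: relays with `β > v` are `−1`, the rest are `+1`. -/
noncomputable def descendingBranch (μ : ℝ × ℝ → ℝ) (b₀ a₀ v : ℝ) : ℝ :=
  ∫ p in preisachTriangle b₀ a₀, μ p * (if p.2 > v then (-1 : ℝ) else 1)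

/-!
On `T(b₀,a₀)` a relay `(α, β)` contributes to `f⁻(v) − f⁺(v)` exactly when `β ≤ v ≤ α`, and
then with `2 μ(α,β)`. Since this relay factor is bounded, Fubini lets us integrate over `v`
first, which yields `2 μ(α,β)(α − β)`.
-/

open Set

lemma measurableSet_preisachTriangle (b₀ a₀ : ℝ) : MeasurableSet (preisachTriangle b₀ a₀) :=
  (measurableSet_le measurable_const measurable_snd).inter
    ((measurableSet_le measurable_snd measurable_fst).inter
      (measurableSet_le measurable_fst measurable_const))

lemma descendingRelay_sub_ascendingRelay {α β : ℝ} (h : β ≤ α) (v : ℝ) :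
    ((if β > v then (-1 : ℝ) else 1) - if α < v then 1 else -1) =
      (Icc β α).indicator (fun _ => 2) v := by
  simp only [indicator_apply, mem_Icc]
  split_ifs <;> grind

lemma descendingBranch_sub_ascendingBranch {b₀ a₀ : ℝ} {μ : ℝ × ℝ → ℝ}
    (hμ : IntegrableOn μ (preisachTriangle b₀ a₀)) (v : ℝ) :
    descendingBranch μ b₀ a₀ v - ascendingBranch μ b₀ a₀ v =
      ∫ p in preisachTriangle b₀ a₀, μ p * (Icc p.2 p.1).indicator (fun _ => 2) v := by
  have hrelay {g : ℝ × ℝ → ℝ} (hg : Measurable g) (hg1 : ∀ p, ‖g p‖ ≤ 1) :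
      IntegrableOn (fun p => μ p * g p) (preisachTriangle b₀ a₀) :=
    hμ.mul_bdd hg.aestronglyMeasurable (.of_forall hg1)
  have hA := hrelay (g := fun p => if p.1 < v then 1 else -1)
    (Measurable.ite (measurableSet_lt measurable_fst measurable_const) measurable_const
      measurable_const) (fun p => by split_ifs <;> norm_num)
  have hD := hrelay (g := fun p => if p.2 > v then -1 else 1)
    (Measurable.ite (measurableSet_lt measurable_const measurable_snd) measurable_const
      measurable_const) (fun p => by split_ifs <;> norm_num)
  rw [descendingBranch, ascendingBranch, ← integral_sub hD hA]
  refine setIntegral_congr_fun (measurableSet_preisachTriangle b₀ a₀) fun p hp => ?_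
  rw [← mul_sub, descendingRelay_sub_ascendingRelay hp.2.1]

lemma measurable_uncurry_indicator_Icc (c : ℝ) :
    Measurable (Function.uncurry fun (v : ℝ) (p : ℝ × ℝ) =>
      (Icc p.2 p.1).indicator (fun _ => c) v) :=
  measurable_const.indicator
    ((measurableSet_le (measurable_snd.comp measurable_snd) measurable_fst).inter
      (measurableSet_le measurable_fst (measurable_fst.comp measurable_snd)))

lemma integral_Ioc_indicator_Icc {b₀ β α a₀ : ℝ} (hb : b₀ ≤ β) (hβα : β ≤ α) (ha : α ≤ a₀)
    (c : ℝ) : ∫ v in Ioc b₀ a₀, (Icc β α).indicator (fun _ => c) v = (α - β) * c := by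
  rw [← integral_Icc_eq_integral_Ioc, setIntegral_indicator measurableSet_Icc, Icc_inter_Icc,
    sup_eq_right.mpr hb, inf_eq_right.mpr ha, setIntegral_const, Real.volume_real_Icc_of_le hβα,
    smul_eq_mul]

theorem integral_integral_mul_swap_of_bounded {X Y : Type*} [MeasurableSpace X]
    [MeasurableSpace Y] {ν : Measure X} [IsFiniteMeasure ν] {m : Measure Y} [SFinite m]
    {f : Y → ℝ} (hf : Integrable f m) {g : X → Y → ℝ} (hg : Measurable (Function.uncurry g))
    {C : ℝ} (hC : ∀ x y, ‖g x y‖ ≤ C) :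
    ∫ x, ∫ y, f y * g x y ∂m ∂ν = ∫ y, f y * ∫ x, g x y ∂ν ∂m := by
  have hint : Integrable (fun q : X × Y => f q.2 * g q.1 q.2) (ν.prod m) :=
    (hf.comp_snd ν).mul_bdd hg.aestronglyMeasurable (.of_forall fun q => hC q.1 q.2)
  simp_rw [integral_integral_swap (f := fun x y => f y * g x y) hint, integral_const_mul]

theorem preisach_loop_signed_area
    (b₀ a₀ : ℝ) (hba : b₀ ≤ a₀) (μ : ℝ × ℝ → ℝ)
    (hμ : IntegrableOn μ (preisachTriangle b₀ a₀) volume) :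
    (∫ v in b₀..a₀,
        (descendingBranch μ b₀ a₀ v - ascendingBranch μ b₀ a₀ v))
      = 2 * ∫ p in preisachTriangle b₀ a₀, μ p * (p.1 - p.2) ∧
    ((∫ v in b₀..a₀,
        (descendingBranch μ b₀ a₀ v - ascendingBranch μ b₀ a₀ v)) = 0 ↔
      (∫ p in preisachTriangle b₀ a₀, μ p * (p.1 - p.2)) = 0) := by
  have harea : (∫ v in b₀..a₀, (descendingBranch μ b₀ a₀ v - ascendingBranch μ b₀ a₀ v))
      = 2 * ∫ p in preisachTriangle b₀ a₀, μ p * (p.1 - p.2) :=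
    calc _ = ∫ v in Ioc b₀ a₀, ∫ p in preisachTriangle b₀ a₀,
            μ p * (Icc p.2 p.1).indicator (fun _ => 2) v := by
          simp_rw [intervalIntegral.integral_of_le hba, descendingBranch_sub_ascendingBranch hμ]
      _ = ∫ p in preisachTriangle b₀ a₀, μ p * ((p.1 - p.2) * 2) := by
          rw [integral_integral_mul_swap_of_bounded hμ (measurable_uncurry_indicator_Icc 2)
            fun _ _ => norm_indicator_le_norm_self _ _]
          exact setIntegral_congr_fun (measurableSet_preisachTriangle b₀ a₀) fun p hp => by
            rw [integral_Ioc_indicator_Icc hp.1 hp.2.1 hp.2.2]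
      _ = _ := by
          rw [← integral_const_mul]
          congr 1 with p
          ring
  exact ⟨harea, by rw [harea, mul_eq_zero]; norm_num⟩
end

section
/- Let β₀ < α₀ be reals, let μ : ℝ² → ℝ be integrable on T(β₀,α₀), and define I(v) := ∬_{{(α,β) : v ≤ α ≤ α₀, β₀ ≤ β ≤ v}} μ(α,β) dα dβ for v ∈ [β₀,α₀]. Suppose there exist m ≥ 1 and reals αᵢ⁻ < αᵢ < αᵢ⁺ for i = 1,…,m with β₀ < α₁⁻, α_m⁺ < α₀ and αⱼ⁺ < α_{j+1}⁻ for j = 1,…,m−1, such that I(αᵢ) = 0 while I(αᵢ⁻) ≠ 0 and I(αᵢ⁺) ≠ 0 for every i. Then f⁺(αᵢ) = f⁻(αᵢ) for every i, while f⁺ ≠ f⁻ at every point αᵢ⁻ and αᵢ⁺; hence the zero set {v ∈ [β₀,α₀] : I(v) = 0} has at least m distinct connected components contained in the open interval (β₀,α₀), one containing each αᵢ, and the major hysteresis loop of the Preisach operator with weighting μ is composed of at least m + 1 subloops. -/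
/-!
STATEMENT 8: If for i = 1,…,m there are interlaced values
β₀ < α₁⁻ < α₁ < α₁⁺ < α₂⁻ < … < α_m⁺ < α₀ with I(αᵢ) = 0 but I(αᵢ⁻) ≠ 0 and
I(αᵢ⁺) ≠ 0, then the ascending and descending branches meet at every αᵢ but
at none of the αᵢ⁻, αᵢ⁺; hence the zero set of I has at least m distinct
connected components inside (β₀, α₀), one containing each αᵢ (so the major
hysteresis loop is composed of at least m + 1 subloops).
-/

open MeasureTheory

/-- The crossover integral `I(v) = ∬_{Ω(v)} μ` over the rectangle
`Ω(v) = {(α,β) : v ≤ α ≤ α₀, β₀ ≤ β ≤ v}`. -/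
noncomputable def crossoverIntegral (μ : ℝ × ℝ → ℝ) (β₀ α₀ v : ℝ) : ℝ :=
  ∫ p in {p : ℝ × ℝ | v ≤ p.1 ∧ p.1 ≤ α₀ ∧ β₀ ≤ p.2 ∧ p.2 ≤ v}, μ p

lemma preisach_key (β₀ α₀ : ℝ) (μ : ℝ × ℝ → ℝ)
    (hμ : IntegrableOn μ (preisachTriangle β₀ α₀) volume) (v : ℝ) :
    descendingBranch μ β₀ α₀ v - ascendingBranch μ β₀ α₀ v
      = 2 * crossoverIntegral μ β₀ α₀ v := by
  have hT : MeasurableSet (preisachTriangle β₀ α₀) := by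
    apply MeasurableSet.inter (measurableSet_le measurable_const measurable_snd)
    exact (measurableSet_le measurable_snd measurable_fst).inter
      (measurableSet_le measurable_fst measurable_const)
  set S : Set (ℝ × ℝ) := {p | v ≤ p.1 ∧ p.2 ≤ v} with hSdef
  have hS : MeasurableSet S :=
    (measurableSet_le measurable_const measurable_fst).inter
      (measurableSet_le measurable_snd measurable_const)
  have hint : ∀ (c : ℝ × ℝ → ℝ), Measurable c → (∀ p, |c p| = 1) →
      IntegrableOn (fun p => μ p * c p) (preisachTriangle β₀ α₀) volume := by
    intro c hc hc1
    apply Integrable.mono' hμ.norm (hμ.aestronglyMeasurable.mul hc.aestronglyMeasurable)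
    filter_upwards with p
    simp [abs_mul, hc1 p]
  have hint1 : IntegrableOn (fun p => μ p * (if p.1 < v then (1:ℝ) else -1))
      (preisachTriangle β₀ α₀) volume := by
    apply hint
    · exact Measurable.ite (measurableSet_lt measurable_fst measurable_const)
        measurable_const measurable_const
    · intro p; split <;> simp
  have hint2 : IntegrableOn (fun p => μ p * (if p.2 > v then (-1:ℝ) else 1))
      (preisachTriangle β₀ α₀) volume := by
    apply hint
    · exact Measurable.ite (measurableSet_lt measurable_const measurable_snd)
        measurable_const measurable_const
    · intro p; split <;> simp
  have e1 : descendingBranch μ β₀ α₀ v - ascendingBranch μ β₀ α₀ v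
      = ∫ p in preisachTriangle β₀ α₀,
          (μ p * (if p.2 > v then (-1:ℝ) else 1)
            - μ p * (if p.1 < v then (1:ℝ) else -1)) :=
    (integral_sub hint2 hint1).symm
  rw [e1]
  have e2 : Set.EqOn
      (fun p => μ p * (if p.2 > v then (-1:ℝ) else 1)
            - μ p * (if p.1 < v then (1:ℝ) else -1))
      (fun p => 2 * S.indicator μ p) (preisachTriangle β₀ α₀) := by
    intro p hp
    obtain ⟨h1', h2', h3'⟩ := hp
    by_cases hα : p.1 < v
    · have hβ : ¬ p.2 > v := by simp only [gt_iff_lt, not_lt]; linarith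
      have hpS : p ∉ S := fun h => absurd h.1 (not_le.mpr hα)
      simp [hα, hβ, Set.indicator_of_notMem hpS]
    · by_cases hβ : p.2 ≤ v
      · have hpS : p ∈ S := ⟨not_lt.mp hα, hβ⟩
        have hβ' : ¬ p.2 > v := not_lt.mpr hβ
        simp only [hα, hβ', if_false, Set.indicator_of_mem hpS]
        ring
      · have hpS : p ∉ S := fun h => absurd h.2 hβ
        have hβ' : p.2 > v := not_le.mp hβ
        simp [hα, hβ', Set.indicator_of_notMem hpS]
    
  rw [setIntegral_congr_fun hT e2, MeasureTheory.integral_const_mul, setIntegral_indicator hS]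
  have hset : preisachTriangle β₀ α₀ ∩ S
      = {p : ℝ × ℝ | v ≤ p.1 ∧ p.1 ≤ α₀ ∧ β₀ ≤ p.2 ∧ p.2 ≤ v} := by
    ext p
    constructor
    · rintro ⟨⟨a, b, c⟩, d, e⟩
      exact ⟨d, c, a, e⟩
    · rintro ⟨a, b, c, d⟩
      exact ⟨⟨c, le_trans d a, b⟩, a, d⟩
  rw [hset, crossoverIntegral]

theorem preisach_multiloop_many
    (β₀ α₀ : ℝ) (hba : β₀ < α₀) (μ : ℝ × ℝ → ℝ)
    (hμ : IntegrableOn μ (preisachTriangle β₀ α₀) volume)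
    (m : ℕ) (hm : 1 ≤ m) (αm αc αp : Fin m → ℝ)
    (horder : ∀ i : Fin m, αm i < αc i ∧ αc i < αp i)
    (hleft : ∀ i : Fin m, β₀ < αm i) (hright : ∀ i : Fin m, αp i < α₀)
    (hsep : ∀ i j : Fin m, (i : ℕ) + 1 = (j : ℕ) → αp i < αm j)
    (hI0 : ∀ i : Fin m, crossoverIntegral μ β₀ α₀ (αc i) = 0)
    (hIm : ∀ i : Fin m, crossoverIntegral μ β₀ α₀ (αm i) ≠ 0)
    (hIp : ∀ i : Fin m, crossoverIntegral μ β₀ α₀ (αp i) ≠ 0) :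
    (∀ i : Fin m,
      ascendingBranch μ β₀ α₀ (αc i) = descendingBranch μ β₀ α₀ (αc i)) ∧
    (∀ i : Fin m,
      ascendingBranch μ β₀ α₀ (αm i) ≠ descendingBranch μ β₀ α₀ (αm i) ∧
      ascendingBranch μ β₀ α₀ (αp i) ≠ descendingBranch μ β₀ α₀ (αp i)) ∧
    (∀ i : Fin m,
      connectedComponentIn
          {v : ℝ | v ∈ Set.Icc β₀ α₀ ∧ crossoverIntegral μ β₀ α₀ v = 0} (αc i)
        ⊆ Set.Ioo β₀ α₀) ∧
    (∀ i j : Fin m, i ≠ j →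
      connectedComponentIn
          {v : ℝ | v ∈ Set.Icc β₀ α₀ ∧ crossoverIntegral μ β₀ α₀ v = 0} (αc i)
        ≠ connectedComponentIn
          {v : ℝ | v ∈ Set.Icc β₀ α₀ ∧ crossoverIntegral μ β₀ α₀ v = 0}
          (αc j)) := by
  have key := preisach_key β₀ α₀ μ hμ
  set Z : Set ℝ :=
    {v : ℝ | v ∈ Set.Icc β₀ α₀ ∧ crossoverIntegral μ β₀ α₀ v = 0} with hZ
  -- basic order facts
  have hmZ : ∀ i, αm i ∉ Z := by
    intro i hi; exact hIm i hi.2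
  have hpZ : ∀ i, αp i ∉ Z := by
    intro i hi; exact hIp i hi.2
  have hcZ : ∀ i, αc i ∈ Z := by
    intro i
    refine ⟨⟨?_, ?_⟩, hI0 i⟩
    · linarith [hleft i, (horder i).1]
    · linarith [hright i, (horder i).2]
  -- connected components
  have hcomp : ∀ i, αc i ∈ connectedComponentIn Z (αc i) :=
    fun i => mem_connectedComponentIn (hcZ i)
  have hsub : ∀ i, connectedComponentIn Z (αc i) ⊆ Z :=
    fun i => connectedComponentIn_subset Z (αc i)
  have hord : ∀ i, Set.OrdConnected (connectedComponentIn Z (αc i)) :=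
    fun i => (isPreconnected_connectedComponentIn).ordConnected
  -- chain lemma
  have hchain : ∀ n : ℕ, ∀ i j : Fin m, (j : ℕ) = (i : ℕ) + n + 1 → αp i < αm j := by
    intro n
    induction n with
    | zero => intro i j h; exact hsep i j (by omega)
    | succ n ih =>
        intro i j h
        have hj' : (i : ℕ) + n + 1 < m := by omega
        set j' : Fin m := ⟨(i : ℕ) + n + 1, hj'⟩ with hj'def
        have h1 : αp i < αm j' := ih i j' rfl
        have h2 : αp j' < αm j := hsep j' j (by simp [hj'def]; omega)
        linarith [(horder j').1, (horder j').2]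
  have hlt : ∀ i j : Fin m, (i : ℕ) < (j : ℕ) → αp i < αm j := by
    intro i j h
    exact hchain ((j : ℕ) - (i : ℕ) - 1) i j (by omega)
  refine ⟨?_, ?_, ?_, ?_⟩
  · intro i
    have := key (αc i)
    rw [hI0 i] at this
    linarith
  · intro i
    constructor
    · intro h
      have := key (αm i)
      rw [h] at this
      exact hIm i (by linarith)
    · intro h
      have := key (αp i)
      rw [h] at this
      exact hIp i (by linarith)
  · intro i x hx
    have hxZ : x ∈ Z := hsub i hx
    rcases lt_or_eq_of_le hxZ.1.1 with h | h
    · rcases lt_or_eq_of_le hxZ.1.2 with h' | h'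
      · exact ⟨h, h'⟩
      · exfalso
        apply hpZ i
        apply hsub i
        apply (hord i).out (hcomp i) hx
        constructor
        · exact le_of_lt (horder i).2
        · rw [h']; exact le_of_lt (hright i)
    · exfalso
      apply hmZ i
      apply hsub i
      apply (hord i).out hx (hcomp i)
      constructor
      · rw [← h]; exact le_of_lt (hleft i)
      · exact le_of_lt (horder i).1
  · have main : ∀ i j : Fin m, (i : ℕ) < (j : ℕ) →
        connectedComponentIn Z (αc i) ≠ connectedComponentIn Z (αc j) := by
      intro i j hij heq
      apply hpZ i
      apply hsub i
      apply (hord i).out (hcomp i) (heq ▸ hcomp j)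
      constructor
      · exact le_of_lt (horder i).2
      · exact le_of_lt (lt_trans (hlt i j hij) (horder j).1)
    intro i j hij
    rcases lt_or_gt_of_ne (fun h : (i : ℕ) = (j : ℕ) => hij (Fin.ext h)) with h | h
    · exact main i j h
    · exact (main j i h).symm
end

section
/- Let β₁ > 0 and let μ_{β₁} be the two-sided weighting function of the symmetric Preisach butterfly operator. Then the ascending and descending branches over the input range [−β₁, β₁] are given in closed form by: f⁺(c) = −(β₁ + c)² for c ∈ [−β₁, 0]; f⁺(c) = −(β₁ − c)(β₁ + 3c) for c ∈ [0, β₁]; f⁻(c) = −(β₁ − c)² for c ∈ [0, β₁]; and f⁻(c) = −(β₁ + c)(β₁ − 3c) for c ∈ [−β₁, 0]. -/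
open MeasureTheory

/-- The two-sided weighting function of the symmetric Preisach butterfly
operator: `−1` on the part of `P₁ = {−β₁ < β ≤ α < β₁}` with `α ≤ −β`,
`+1` on the part with `α > −β`, and `0` outside `P₁`. -/
noncomputable def butterflyWeight (β₁ : ℝ) : ℝ × ℝ → ℝ := fun p =>
  if -β₁ < p.2 ∧ p.2 ≤ p.1 ∧ p.1 < β₁ then
    (if p.1 ≤ -p.2 then (-1 : ℝ) else 1)
  else 0

/-!
Off the antidiagonal `α + β = 0`, the reflection `(α, β) ↦ (-β, -α)`, which preserves Lebesgue
measure, changes the sign of the butterfly weight `μ`. Hence `∫ μ = 0`, and the same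
substitution turns the descending branch into the ascending one: `f⁻(c) = f⁺(-c)`.
Writing the ascending sign as `2 · 𝟙{α < c} - 1` and applying Fubini gives
`f⁺(c) = 2 ∫_{-β₁}^{c} g`, where `g(α) = ∫ μ(α, β) dβ` is `-(α + β₁)` on `(-β₁, 0]` and
`3α - β₁` on `(0, β₁)`. Integrating these affine pieces gives the closed forms.
-/

open Set

theorem integral_mul_ite_one_neg_one {α : Type*} [MeasurableSpace α] {μ : Measure α}
    {f : α → ℝ} {P : α → Prop} [DecidablePred P] (hP : MeasurableSet {x | P x})
    (hf : Integrable f μ) :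
    ∫ x, f x * (if P x then 1 else -1) ∂μ = 2 * ∫ x in {x | P x}, f x ∂μ - ∫ x, f x ∂μ := by
  have h : (fun x => f x * if P x then 1 else -1) =
      fun x => 2 * {x | P x}.indicator f x - f x := by
    ext x
    by_cases hx : P x
    · simp only [hx, ↓reduceIte, mul_one, mem_ofPred_eq, indicator_of_mem]
      ring
    · simp [hx]
  rw [h, integral_sub ((hf.indicator hP).const_mul 2) hf, integral_const_mul,
    integral_indicator hP]

theorem setIntegral_preimage_fst {α β E : Type*} [MeasurableSpace α] [MeasurableSpace β]
    [NormedAddCommGroup E] [NormedSpace ℝ E] {μ : Measure α} {ν : Measure β} [SFinite μ]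
    [SFinite ν] {f : α × β → E}
    (hf : Integrable f (μ.prod ν)) (s : Set α) :
    ∫ p in Prod.fst ⁻¹' s, f p ∂μ.prod ν = ∫ x in s, ∫ y, f (x, y) ∂ν ∂μ := by
  rw [← prod_univ, setIntegral_prod f hf.integrableOn, Measure.restrict_univ]

theorem intervalIntegral_mul_add (m q a b : ℝ) :
    ∫ x in a..b, (m * x + q) = m * (b ^ 2 - a ^ 2) / 2 + q * (b - a) := by
  rw [intervalIntegral.integral_add (f := fun x => m * x) (g := fun _ => q)
    ((continuous_const.mul continuous_id).intervalIntegrable _ _) intervalIntegrable_const,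
    intervalIntegral.integral_const_mul, integral_id, intervalIntegral.integral_const, smul_eq_mul]
  ring

theorem ae_fst_add_snd_ne_zero : ∀ᵐ p : ℝ × ℝ, p.1 + p.2 ≠ 0 := by
  set L := LinearMap.ker (LinearMap.fst ℝ ℝ ℝ + LinearMap.snd ℝ ℝ ℝ)
  have hL : L ≠ ⊤ := fun h => by simpa [L] using Submodule.eq_top_iff'.1 h (1, 0)
  rw [ae_iff]
  convert Measure.addHaar_submodule volume L hL using 2
  ext p
  simp [L]

theorem integral_comp_neg_swap (f : ℝ × ℝ → ℝ) : ∫ p : ℝ × ℝ, f (-p.swap) = ∫ p, f p := by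
  rw [Measure.volume_eq_prod, integral_prod_swap (fun p : ℝ × ℝ => f (-p)),
    ← Measure.volume_eq_prod, integral_neg_eq_self]

namespace butterflyWeight

variable {β₁ : ℝ}

theorem measurable : Measurable (butterflyWeight β₁) := by
  refine Measurable.ite ?_ (Measurable.ite ?_ measurable_const measurable_const)
    measurable_const
  · simp only [ofPred_and]
    exact (measurableSet_lt measurable_const measurable_snd).inter
      ((measurableSet_le measurable_snd measurable_fst).inter
        (measurableSet_lt measurable_fst measurable_const))
  · exact measurableSet_le measurable_fst measurable_snd.neg

theorem eq_zero_outside {p : ℝ × ℝ} (hp : ¬(-β₁ < p.2 ∧ p.2 ≤ p.1 ∧ p.1 < β₁)) :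
    butterflyWeight β₁ p = 0 :=
  if_neg hp

theorem setIntegral_preisachTriangle_mul (s : ℝ × ℝ → ℝ) :
    ∫ p in preisachTriangle (-β₁) β₁, butterflyWeight β₁ p * s p =
      ∫ p, butterflyWeight β₁ p * s p :=
  setIntegral_eq_integral_of_forall_compl_eq_zero fun _ hp => by
    rw [eq_zero_outside fun ⟨h₁, h₂, h₃⟩ => hp ⟨h₁.le, h₂, h₃.le⟩, zero_mul]

theorem integrable : Integrable (butterflyWeight β₁) := by
  have hsupp : Function.support (butterflyWeight β₁) ⊆ Icc (-β₁, -β₁) (β₁, β₁) := by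
    intro p hp
    by_contra h
    refine hp (eq_zero_outside fun ⟨h₁, h₂, h₃⟩ => h ?_)
    exact ⟨⟨by linarith, h₁.le⟩, h₃.le, by linarith⟩
  refine (integrableOn_iff_integrable_of_support_subset hsupp).1 ?_
  refine Measure.integrableOn_of_bounded isCompact_Icc.measure_lt_top.ne
    measurable.aestronglyMeasurable (M := 1) (ae_of_all _ fun p => ?_)
  unfold butterflyWeight
  split_ifs <;> norm_num

theorem apply_neg_swap {p : ℝ × ℝ} (hp : p.1 + p.2 ≠ 0) :
    butterflyWeight β₁ (-p.swap) = -butterflyWeight β₁ p := by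
  obtain ⟨a, b⟩ := p
  have hP : (-β₁ < -a ∧ -a ≤ -b ∧ -b < β₁) ↔ (-β₁ < b ∧ b ≤ a ∧ a < β₁) := by
    constructor <;> rintro ⟨h₁, h₂, h₃⟩ <;> exact ⟨by linarith, by linarith, by linarith⟩
  have hQ : -b ≤ a ↔ ¬a ≤ -b := by
    rw [not_le]
    exact ⟨fun h => h.lt_of_ne fun h' => hp (by linarith), le_of_lt⟩
  simp only [butterflyWeight, Prod.swap_prod_mk, Prod.neg_mk, neg_neg, hP, hQ]
  split_ifs <;> norm_num

theorem integral_mk_eq_intervalIntegral {x : ℝ} (h₁ : -β₁ ≤ x) (h₂ : x < β₁) :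
    ∫ y, butterflyWeight β₁ (x, y) = ∫ y in -β₁..x, if x ≤ -y then -1 else 1 := by
  have h : (fun y => butterflyWeight β₁ (x, y)) =
      (Ioc (-β₁) x).indicator fun y => if x ≤ -y then -1 else 1 := by
    ext y
    by_cases hy : y ∈ Ioc (-β₁) x
    · rw [indicator_of_mem hy]
      exact if_pos ⟨hy.1, hy.2, h₂⟩
    · rw [indicator_of_notMem hy]
      exact eq_zero_outside fun ⟨h₁, h₂, _⟩ => hy ⟨h₁, h₂⟩
  rw [h, integral_indicator measurableSet_Ioc, intervalIntegral.integral_of_le h₁]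

theorem integral_mk_of_le_neg {x : ℝ} (hx : x ≤ -β₁) : ∫ y, butterflyWeight β₁ (x, y) = 0 := by
  rw [← integral_zero ℝ ℝ]
  congr 1 with y
  exact eq_zero_outside fun ⟨h₁, h₂, _⟩ => by linarith

theorem integral_mk_of_nonpos {x : ℝ} (h₁ : -β₁ < x) (h₂ : x ≤ 0) :
    ∫ y, butterflyWeight β₁ (x, y) = -(x + β₁) := by
  rw [integral_mk_eq_intervalIntegral h₁.le (by linarith),
    intervalIntegral.integral_congr_Ioo_of_le h₁.le (g := fun _ => -1)
      fun y hy => if_pos (by linarith [hy.2]),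
    intervalIntegral.integral_const, smul_eq_mul]
  ring

theorem integral_mk_of_pos {x : ℝ} (h₁ : 0 < x) (h₂ : x < β₁) :
    ∫ y, butterflyWeight β₁ (x, y) = 3 * x - β₁ := by
  have hmono : Monotone fun y : ℝ => if x ≤ -y then (-1 : ℝ) else 1 := by
    intro y z hyz
    dsimp only
    split_ifs <;> grind
  rw [integral_mk_eq_intervalIntegral (by linarith) h₂,
    ← intervalIntegral.integral_add_adjacent_intervals hmono.intervalIntegrable
      hmono.intervalIntegrable (b := -x),
    intervalIntegral.integral_congr_Ioo_of_le (by linarith) (g := fun _ => -1)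
      fun y hy => if_pos (by linarith [hy.2]),
    intervalIntegral.integral_congr_Ioo_of_le (by linarith) (g := fun _ => 1)
      fun y hy => if_neg (by linarith [hy.1]),
    intervalIntegral.integral_const, intervalIntegral.integral_const, smul_eq_mul, smul_eq_mul]
  ring

theorem integral_eq_zero : ∫ p, butterflyWeight β₁ p = 0 := by
  have h : ∫ p, butterflyWeight β₁ p = -∫ p, butterflyWeight β₁ p :=
    calc ∫ p, butterflyWeight β₁ p = ∫ p : ℝ × ℝ, butterflyWeight β₁ (-p.swap) :=
          (integral_comp_neg_swap _).symm
      _ = ∫ p, -butterflyWeight β₁ p :=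
          integral_congr_ae (ae_fst_add_snd_ne_zero.mono fun _ => apply_neg_swap)
      _ = -∫ p, butterflyWeight β₁ p := integral_neg _
  linarith

end butterflyWeight

open butterflyWeight

theorem ascendingBranch_butterflyWeight {β₁ c : ℝ} (hc : -β₁ ≤ c) :
    ascendingBranch (butterflyWeight β₁) (-β₁) β₁ c =
      2 * ∫ x in -β₁..c, ∫ y, butterflyWeight β₁ (x, y) := by
  have hfst : MeasurableSet {p : ℝ × ℝ | p.1 < c} :=
    measurableSet_lt measurable_fst measurable_const
  rw [ascendingBranch, setIntegral_preisachTriangle_mul, integral_mul_ite_one_neg_one hfst integrable, integral_eq_zero, sub_zero,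
    show {p : ℝ × ℝ | p.1 < c} = Prod.fst ⁻¹' Iio c from rfl, Measure.volume_eq_prod,
    setIntegral_preimage_fst (Measure.volume_eq_prod ℝ ℝ ▸ integrable),
    setIntegral_eq_of_subset_of_forall_sdiff_eq_zero measurableSet_Iio Ioo_subset_Iio_self
      fun x hx => integral_mk_of_le_neg (not_lt.1 fun h => hx.2 ⟨h, hx.1⟩),
    intervalIntegral.integral_of_le hc, integral_Ioc_eq_integral_Ioo]

theorem ascendingBranch_butterflyWeight_of_nonpos {β₁ c : ℝ} (hc : c ∈ Icc (-β₁) 0) :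
    ascendingBranch (butterflyWeight β₁) (-β₁) β₁ c = -(β₁ + c) ^ 2 := by
  rw [ascendingBranch_butterflyWeight hc.1,
    intervalIntegral.integral_congr_Ioo_of_le hc.1 (g := fun x => -1 * x + -β₁)
      fun x hx => (integral_mk_of_nonpos hx.1 (hx.2.le.trans hc.2)).trans (by ring),
    intervalIntegral_mul_add]
  ring

theorem ascendingBranch_butterflyWeight_of_nonneg {β₁ c : ℝ} (hc : c ∈ Icc 0 β₁) :
    ascendingBranch (butterflyWeight β₁) (-β₁) β₁ c = -(β₁ - c) * (β₁ + 3 * c) := by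
  have hint : Integrable fun x => ∫ y, butterflyWeight β₁ (x, y) :=
    (Measure.volume_eq_prod ℝ ℝ ▸ integrable).integral_prod_left
  rw [ascendingBranch_butterflyWeight (by linarith [hc.1, hc.2]),
    ← intervalIntegral.integral_add_adjacent_intervals hint.intervalIntegrable
      hint.intervalIntegrable (b := 0),
    intervalIntegral.integral_congr_Ioo_of_le (by linarith [hc.1, hc.2])
      (g := fun x => -1 * x + -β₁)
      fun x hx => (integral_mk_of_nonpos hx.1 hx.2.le).trans (by ring),
    intervalIntegral.integral_congr_Ioo_of_le hc.1 (g := fun x => 3 * x + -β₁)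
      fun x hx => (integral_mk_of_pos hx.1 (hx.2.trans_le hc.2)).trans (by ring),
    intervalIntegral_mul_add, intervalIntegral_mul_add]
  ring

theorem descendingBranch_butterflyWeight (β₁ c : ℝ) :
    descendingBranch (butterflyWeight β₁) (-β₁) β₁ c =
      ascendingBranch (butterflyWeight β₁) (-β₁) β₁ (-c) := by
  rw [descendingBranch, ascendingBranch, setIntegral_preisachTriangle_mul,
    setIntegral_preisachTriangle_mul, ← integral_comp_neg_swap]
  refine integral_congr_ae (ae_fst_add_snd_ne_zero.mono fun p hp => ?_)
  simp only [Prod.snd_neg, Prod.snd_swap, apply_neg_swap hp, gt_iff_lt, lt_neg]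
  split_ifs <;> ring

theorem butterfly_branches_closed_form_general (β₁ : ℝ) :
    (∀ c ∈ Set.Icc (-β₁) (0 : ℝ),
      ascendingBranch (butterflyWeight β₁) (-β₁) β₁ c = -(β₁ + c) ^ 2) ∧
    (∀ c ∈ Set.Icc (0 : ℝ) β₁,
      ascendingBranch (butterflyWeight β₁) (-β₁) β₁ c
        = -(β₁ - c) * (β₁ + 3 * c)) ∧
    (∀ c ∈ Set.Icc (0 : ℝ) β₁,
      descendingBranch (butterflyWeight β₁) (-β₁) β₁ c = -(β₁ - c) ^ 2) ∧
    (∀ c ∈ Set.Icc (-β₁) (0 : ℝ),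
      descendingBranch (butterflyWeight β₁) (-β₁) β₁ c
        = -(β₁ + c) * (β₁ - 3 * c)) := by
  refine ⟨fun c hc => ascendingBranch_butterflyWeight_of_nonpos hc,
    fun c hc => ascendingBranch_butterflyWeight_of_nonneg hc, fun c hc => ?_, fun c hc => ?_⟩
  · rw [descendingBranch_butterflyWeight,
      ascendingBranch_butterflyWeight_of_nonpos ⟨neg_le_neg hc.2, neg_nonpos.2 hc.1⟩]
    ring
  · rw [descendingBranch_butterflyWeight,
      ascendingBranch_butterflyWeight_of_nonneg ⟨neg_nonneg.2 hc.2, neg_le.1 hc.1⟩]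
    ring

theorem butterfly_branches_closed_form (β₁ : ℝ) (hβ₁ : 0 < β₁) :
    (∀ c ∈ Set.Icc (-β₁) (0 : ℝ),
      ascendingBranch (butterflyWeight β₁) (-β₁) β₁ c = -(β₁ + c) ^ 2) ∧
    (∀ c ∈ Set.Icc (0 : ℝ) β₁,
      ascendingBranch (butterflyWeight β₁) (-β₁) β₁ c
        = -(β₁ - c) * (β₁ + 3 * c)) ∧
    (∀ c ∈ Set.Icc (0 : ℝ) β₁,
      descendingBranch (butterflyWeight β₁) (-β₁) β₁ c = -(β₁ - c) ^ 2) ∧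
    (∀ c ∈ Set.Icc (-β₁) (0 : ℝ),
      descendingBranch (butterflyWeight β₁) (-β₁) β₁ c
        = -(β₁ + c) * (β₁ - 3 * c)) :=
  butterfly_branches_closed_form_general β₁
end

section
/- Let β₁ > 0 and let μ_{β₁} be the two-sided weighting function of the symmetric Preisach butterfly operator. Then ∬_{T(−β₁,β₁)} μ_{β₁}(α,β)·(α − β) dα dβ = 0; consequently, the butterfly hysteresis loop traced by the Preisach operator with weighting μ_{β₁} under a periodic input with minimum −β₁ and maximum β₁ encloses zero total signed area. -/
/-!
STATEMENT 10: The symmetric Preisach butterfly weighting μ_{β₁} satisfies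
∬_{T(−β₁,β₁)} μ_{β₁}(α,β)(α−β) dα dβ = 0, i.e. the corresponding butterfly
hysteresis loop encloses zero total signed area.
-/

open MeasureTheory

/-- The symmetry `(α,β) ↦ (−β,−α)` as a measurable equiv. -/
def butterflyFlip : MeasurableEquiv (ℝ × ℝ) (ℝ × ℝ) where
  toFun := fun p => (-p.2, -p.1)
  invFun := fun p => (-p.2, -p.1)
  left_inv := fun p => by simp
  right_inv := fun p => by simp
  measurable_toFun := measurable_snd.neg.prodMk measurable_fst.neg
  measurable_invFun := measurable_snd.neg.prodMk measurable_fst.neg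

lemma butterflyFlip_measurePreserving :
    MeasurePreserving (butterflyFlip : ℝ × ℝ → ℝ × ℝ) volume volume := by
  have h1 : MeasurePreserving (Neg.neg : ℝ × ℝ → ℝ × ℝ) volume volume :=
    Measure.measurePreserving_neg volume
  have h2 : MeasurePreserving (Prod.swap : ℝ × ℝ → ℝ × ℝ) volume volume := by
    rw [Measure.volume_eq_prod]
    exact Measure.measurePreserving_swap
  have : (butterflyFlip : ℝ × ℝ → ℝ × ℝ) = Neg.neg ∘ Prod.swap := by
    funext p; rfl
  rw [this]
  exact h1.comp h2

lemma antidiag_null : (volume : Measure (ℝ × ℝ)) {p : ℝ × ℝ | p.1 = -p.2} = 0 := by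
  have hset : {p : ℝ × ℝ | p.1 = -p.2}
      = (LinearMap.ker ((LinearMap.fst ℝ ℝ ℝ) + (LinearMap.snd ℝ ℝ ℝ)) :
          Submodule ℝ (ℝ × ℝ)) := by
    ext p
    simp [LinearMap.mem_ker, eq_neg_iff_add_eq_zero]
  rw [hset]
  apply Measure.addHaar_submodule
  intro h
  have h10 : ((1, 0) : ℝ × ℝ) ∈
      LinearMap.ker ((LinearMap.fst ℝ ℝ ℝ) + (LinearMap.snd ℝ ℝ ℝ)) := by
    rw [h]; trivial
  simp [LinearMap.mem_ker] at h10

theorem butterfly_zero_signed_area (β₁ : ℝ) (hβ₁ : 0 < β₁) :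
    (∫ p in preisachTriangle (-β₁) β₁,
      butterflyWeight β₁ p * (p.1 - p.2)) = 0 := by
  set S := preisachTriangle (-β₁) β₁ with hSdef
  set f : ℝ × ℝ → ℝ := fun p => butterflyWeight β₁ p * (p.1 - p.2) with hfdef
  set g : ℝ × ℝ → ℝ := S.indicator f with hgdef
  have hS : MeasurableSet S := by
    rw [hSdef]
    unfold preisachTriangle
    apply MeasurableSet.inter
    · exact measurableSet_le measurable_const measurable_snd
    apply MeasurableSet.inter
    · exact measurableSet_le measurable_snd measurable_fst
    · exact measurableSet_le measurable_fst measurable_const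
  have h1 : (∫ p in S, f p) = ∫ p, g p := (integral_indicator hS).symm
  have h2 : (∫ p, g p) = ∫ p, g (butterflyFlip p) :=
    (butterflyFlip_measurePreserving.integral_comp
      butterflyFlip.measurableEmbedding g).symm
  have hkey : ∀ p : ℝ × ℝ, p.1 ≠ -p.2 → g (butterflyFlip p) = -g p := by
    intro p hne'
    show g (-p.2, -p.1) = -g p
    have hmem : ((-p.2, -p.1) : ℝ × ℝ) ∈ S ↔ p ∈ S := by
      rw [hSdef]
      unfold preisachTriangle
      simp only [Set.mem_setOf_eq]
      constructor <;> rintro ⟨a, b, c⟩ <;>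
        exact ⟨by linarith, by linarith, by linarith⟩
    have houter : (-β₁ < -p.1 ∧ -p.1 ≤ -p.2 ∧ -p.2 < β₁) ↔
        (-β₁ < p.2 ∧ p.2 ≤ p.1 ∧ p.1 < β₁) := by
      constructor <;> rintro ⟨a, b, c⟩ <;> exact ⟨by linarith, by linarith, by linarith⟩
    have hw : butterflyWeight β₁ (-p.2, -p.1) = -butterflyWeight β₁ p := by
      show (if -β₁ < -p.1 ∧ -p.1 ≤ -p.2 ∧ -p.2 < β₁ then
              (if (-p.2 : ℝ) ≤ -(-p.1) then (-1 : ℝ) else 1) else 0)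
          = -(if -β₁ < p.2 ∧ p.2 ≤ p.1 ∧ p.1 < β₁ then
              (if p.1 ≤ -p.2 then (-1 : ℝ) else 1) else 0)
      by_cases hA : -β₁ < p.2 ∧ p.2 ≤ p.1 ∧ p.1 < β₁
      · rw [if_pos (houter.mpr hA), if_pos hA]
        rcases lt_or_gt_of_ne hne' with h | h
        · rw [if_neg (by push_neg; linarith), if_pos (le_of_lt h)]; norm_num
        · rw [if_pos (by linarith), if_neg (by push_neg; linarith)]
      · rw [if_neg (fun hh => hA (houter.mp hh)), if_neg hA]; norm_num
    have hf : f (-p.2, -p.1) = -f p := by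
      show butterflyWeight β₁ (-p.2, -p.1) * ((-p.2) - (-p.1))
          = -(butterflyWeight β₁ p * (p.1 - p.2))
      rw [hw]; ring
    by_cases hmemp : p ∈ S
    · rw [hgdef, Set.indicator_of_mem (hmem.mpr hmemp), Set.indicator_of_mem hmemp, hf]
    · rw [hgdef, Set.indicator_of_notMem (fun h => hmemp (hmem.mp h)),
        Set.indicator_of_notMem hmemp, neg_zero]
  have hae : (fun p => g (butterflyFlip p)) =ᵐ[volume] fun p => -g p := by
    rw [Filter.EventuallyEq, ae_iff]
    refine measure_mono_null ?_ antidiag_null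
    intro p hp
    by_contra hne
    exact hp (hkey p hne)
  have h3 : (∫ p, g (butterflyFlip p)) = -∫ p, g p := by
    rw [integral_congr_ae hae, integral_neg]
  have : (∫ p, g p) = 0 := by
    have := h2.trans h3
    linarith
  rw [hSdef] at h1 ⊢
  rw [show (fun p : ℝ × ℝ => butterflyWeight β₁ p * (p.1 - p.2)) = f from hfdef.symm] at *
  calc (∫ p in preisachTriangle (-β₁) β₁, f p) = ∫ p, g p := h1
    _ = 0 := this
end

section
/- Let β₁ > 0 and let μ_{β₁} be the two-sided weighting function of the symmetric Preisach butterfly operator. For v ∈ [−β₁, β₁] define I(v) := ∬_{{(α,β) : v ≤ α ≤ β₁, −β₁ ≤ β ≤ v}} μ_{β₁}(α,β) dα dβ. Then I(v) = 2v(β₁ − |v|) for all v ∈ [−β₁, β₁]; in particular I(v) = 0 for v ∈ (−β₁, β₁) if and only if v = 0, so the butterfly loop of this Preisach operator under a periodic input with minimum −β₁ and maximum β₁ has exactly one interior crossover point, located at input value u_c = 0. -/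
/-!
On the rectangle, away from the null edges `α = β₁` and `β = -β₁`, the weight is a step function
of `α + β` alone: `μ(α, β) = -1` for `α + β ≤ 0` and `1` otherwise. This step is the derivative
of `|·|` off `0`, so integrating in `β` over `[-β₁, v]` gives `|α + v| - |α - β₁|`; and `|·|`
is the derivative of `t ↦ t|t|/2`, so integrating in `α` over `[v, β₁]` gives
`((β₁ + v)² - (β₁ - v)²)/2 - 2v|v| = 2v(β₁ - |v|)`.
-/

open MeasureTheory

/-- The crossover integral `I(v)` of the butterfly weighting over the
rectangle `{(α,β) : v ≤ α ≤ β₁, −β₁ ≤ β ≤ v}`. -/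
noncomputable def butterflyCrossoverIntegral (β₁ v : ℝ) : ℝ :=
  ∫ p in {p : ℝ × ℝ | v ≤ p.1 ∧ p.1 ≤ β₁ ∧ -β₁ ≤ p.2 ∧ p.2 ≤ v},
    butterflyWeight β₁ p

noncomputable def stepSign (t : ℝ) : ℝ := if t ≤ 0 then -1 else 1

lemma hasDerivAt_abs_stepSign {t : ℝ} (ht : t ≠ 0) : HasDerivAt (|·|) (stepSign t) t := by
  rcases ht.lt_or_gt with h | h
  · simpa [stepSign, h.le] using hasDerivAt_abs_neg h
  · simpa [stepSign, not_le.mpr h] using hasDerivAt_abs_pos h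

lemma monotone_stepSign : Monotone stepSign := by
  intro a b hab
  unfold stepSign
  split_ifs <;> linarith

lemma integral_stepSign (a b : ℝ) : ∫ t in a..b, stepSign t = |b| - |a| :=
  integral_eq_of_hasDerivAt_off_countable _ _ (Set.countable_singleton 0)
    continuous_abs.continuousOn (fun _ ht => hasDerivAt_abs_stepSign ht.2)
    (monotone_stepSign.monotoneOn _).intervalIntegrable

lemma integral_abs (a b : ℝ) : ∫ t in a..b, |t| = b * |b| / 2 - a * |a| / 2 := by
  refine integral_eq_of_hasDerivAt_off_countable (fun t => t * |t| / 2) _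
    (Set.countable_singleton 0) (by fun_prop) (fun t ht => ?_)
    (continuous_abs.intervalIntegrable _ _)
  refine (((hasDerivAt_id t).mul (hasDerivAt_abs ht.2)).div_const 2).congr_deriv ?_
  rw [id, mul_comm t, sign_mul_self]
  ring

lemma measurable_butterflyWeight (β₁ : ℝ) : Measurable (butterflyWeight β₁) := by
  unfold butterflyWeight
  refine Measurable.ite ?_ (Measurable.ite ?_ measurable_const measurable_const)
    measurable_const
  · exact (measurableSet_lt measurable_const measurable_snd).inter
      ((measurableSet_le measurable_snd measurable_fst).inter
        (measurableSet_lt measurable_fst measurable_const))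
  · exact measurableSet_le measurable_fst measurable_snd.neg

lemma norm_butterflyWeight_le_one (β₁ : ℝ) (p : ℝ × ℝ) : ‖butterflyWeight β₁ p‖ ≤ 1 := by
  unfold butterflyWeight
  split_ifs <;> simp

lemma integrableOn_butterflyWeight (β₁ : ℝ) {s : Set (ℝ × ℝ)} (hs : volume s ≠ ⊤) :
    IntegrableOn (butterflyWeight β₁) s :=
  Measure.integrableOn_of_bounded hs (measurable_butterflyWeight β₁).aestronglyMeasurable
    (Filter.Eventually.of_forall (norm_butterflyWeight_le_one β₁))

lemma butterflyWeight_eq_stepSign {β₁ α β : ℝ} (hβ : -β₁ < β) (hβα : β ≤ α) (hα : α < β₁) :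
    butterflyWeight β₁ (α, β) = stepSign (α + β) := by
  simp only [butterflyWeight, stepSign, if_pos (And.intro hβ (And.intro hβα hα)),
    le_neg_iff_add_nonpos_right]

lemma integral_butterflyWeight_slice {β₁ v α : ℝ} (hv : -β₁ ≤ v) (hvα : v ≤ α) (hα : α < β₁) :
    ∫ β in (-β₁)..v, butterflyWeight β₁ (α, β) = |α + v| - |α - β₁| := by
  calc ∫ β in (-β₁)..v, butterflyWeight β₁ (α, β)
      = ∫ β in (-β₁)..v, stepSign (α + β) := by
        refine intervalIntegral.integral_congr_ae (Filter.Eventually.of_forall fun β hβ => ?_)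
        rw [Set.uIoc_of_le hv] at hβ
        exact butterflyWeight_eq_stepSign hβ.1 (hβ.2.trans hvα) hα
    _ = |α + v| - |α - β₁| := by
        rw [intervalIntegral.integral_comp_add_left, integral_stepSign, sub_eq_add_neg α]

lemma butterflyCrossoverIntegral_eq {β₁ v : ℝ} (hv : v ∈ Set.Icc (-β₁) β₁) :
    butterflyCrossoverIntegral β₁ v = 2 * v * (β₁ - |v|) := by
  have hrect : {p : ℝ × ℝ | v ≤ p.1 ∧ p.1 ≤ β₁ ∧ -β₁ ≤ p.2 ∧ p.2 ≤ v}
      = Set.Icc v β₁ ×ˢ Set.Icc (-β₁) v := by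
    ext p
    simp only [Set.mem_ofPred_eq, Set.mem_prod, Set.mem_Icc, and_assoc]
  have hint : IntegrableOn (butterflyWeight β₁) (Set.Icc v β₁ ×ˢ Set.Icc (-β₁) v) :=
    integrableOn_butterflyWeight β₁ (isCompact_Icc.prod isCompact_Icc).measure_lt_top.ne
  have hfubini : butterflyCrossoverIntegral β₁ v
      = ∫ α in v..β₁, (|α + v| - |α - β₁|) := by
    rw [butterflyCrossoverIntegral, hrect, Measure.volume_eq_prod, setIntegral_prod _ hint,
      integral_Icc_eq_integral_Ico, intervalIntegral.integral_of_le hv.2,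
      ← integral_Ico_eq_integral_Ioc]
    refine setIntegral_congr_fun measurableSet_Ico fun α hα => ?_
    rw [integral_Icc_eq_integral_Ioc, ← intervalIntegral.integral_of_le hv.1,
      integral_butterflyWeight_slice hv.1 hα.1 hα.2]
  rw [hfubini, intervalIntegral.integral_sub
      ((continuous_add_const v).abs.intervalIntegrable _ _)
      ((continuous_sub_right β₁).abs.intervalIntegrable _ _),
    intervalIntegral.integral_comp_add_right (|·|), intervalIntegral.integral_comp_sub_right (|·|),
    integral_abs, integral_abs, abs_of_nonneg (by linarith [hv.1] : 0 ≤ β₁ + v),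
    abs_of_nonpos (by linarith [hv.2] : v - β₁ ≤ 0), ← two_mul, abs_mul, abs_two, sub_self]
  ring

theorem butterfly_crossover_integral_general (β₁ : ℝ) :
    (∀ v ∈ Set.Icc (-β₁) β₁,
      butterflyCrossoverIntegral β₁ v = 2 * v * (β₁ - |v|)) ∧
    (∀ v ∈ Set.Ioo (-β₁) β₁,
      (butterflyCrossoverIntegral β₁ v = 0 ↔ v = 0)) := by
  refine ⟨fun v hv => butterflyCrossoverIntegral_eq hv, fun v hv => ?_⟩
  have hgap : β₁ - |v| ≠ 0 := (sub_pos.mpr (abs_lt.mpr hv)).ne'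
  simp [butterflyCrossoverIntegral_eq (Set.Ioo_subset_Icc_self hv), hgap]

theorem butterfly_crossover_integral (β₁ : ℝ) (hβ₁ : 0 < β₁) :
    (∀ v ∈ Set.Icc (-β₁) β₁,
      butterflyCrossoverIntegral β₁ v = 2 * v * (β₁ - |v|)) ∧
    (∀ v ∈ Set.Ioo (-β₁) β₁,
      (butterflyCrossoverIntegral β₁ v = 0 ↔ v = 0)) :=
  butterfly_crossover_integral_general β₁
end

section
/- Let β₁ > 0 and define μ' : ℝ² → ℝ by μ'(α,β) = −1 if −β₁ < β < 0 and 0 < α < β + β₁; μ'(α,β) = 1 if −β₁ < β ≤ α < β₁ and not (−β₁ < β < 0 and 0 < α < β + β₁); and μ'(α,β) = 0 otherwise. Then ∬_{[0,β₁]×[−β₁,0]} μ'(α,β) dα dβ = 0 (the integral taken over α ∈ [0,β₁], β ∈ [−β₁,0]); hence the hysteresis loop of the Preisach operator with weighting μ' under a periodic input with minimum −β₁ and maximum β₁ has a crossover point at input value u_c = 0. -/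
/-! On the open square `(0, β₁) × (−β₁, 0)` the weight is `+1` below the antidiagonal
`β = α − β₁` and `−1` above it, so every vertical slice integrates to `2α − β₁`, whose
mean over `[0, β₁]` is zero. -/

open MeasureTheory

/-- The weighting function μ' : `−1` on `P₁₋ = {−β₁ < β < 0, 0 < α < β + β₁}`,
`+1` on the rest of `P₁ = {−β₁ < β ≤ α < β₁}`, and `0` outside `P₁`. -/
noncomputable def sameOrientationWeight (β₁ : ℝ) : ℝ × ℝ → ℝ := fun p =>
  if -β₁ < p.2 ∧ p.2 < 0 ∧ 0 < p.1 ∧ p.1 < p.2 + β₁ then (-1 : ℝ)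
  else if -β₁ < p.2 ∧ p.2 ≤ p.1 ∧ p.1 < β₁ then 1
  else 0

open Set

lemma integral_Ioo_of_eqOn_const_of_eqOn_const {a m b c d : ℝ} {f : ℝ → ℝ}
    (ham : a ≤ m) (hmb : m < b) (hc : EqOn f (fun _ => c) (Ioc a m))
    (hd : EqOn f (fun _ => d) (Ioo m b)) :
    ∫ x in Ioo a b, f x = c * (m - a) + d * (b - m) := by
  have hdisj : Disjoint (Ioc a m) (Ioo m b) :=
    disjoint_left.mpr fun _ hl hr => lt_irrefl _ (hl.2.trans_lt hr.1)
  have hfc : IntegrableOn f (Ioc a m) :=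
    (integrableOn_congr_fun hc measurableSet_Ioc).mpr (integrableOn_const measure_Ioc_lt_top.ne)
  have hfd : IntegrableOn f (Ioo m b) :=
    (integrableOn_congr_fun hd measurableSet_Ioo).mpr (integrableOn_const measure_Ioo_lt_top.ne)
  rw [← Ioc_union_Ioo_eq_Ioo ham hmb, setIntegral_union hdisj measurableSet_Ioo hfc hfd,
    setIntegral_congr_fun measurableSet_Ioc hc, setIntegral_congr_fun measurableSet_Ioo hd,
    setIntegral_const, setIntegral_const, Real.volume_real_Ioc_of_le ham,
    Real.volume_real_Ioo_of_le hmb.le, smul_eq_mul, smul_eq_mul, mul_comm c, mul_comm d]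

namespace sameOrientationWeight

variable {β₁ : ℝ}

lemma measurable : Measurable (sameOrientationWeight β₁) := by
  refine Measurable.ite ?_ measurable_const (Measurable.ite ?_ measurable_const measurable_const)
  · exact (measurableSet_lt measurable_const measurable_snd).inter
      ((measurableSet_lt measurable_snd measurable_const).inter
        ((measurableSet_lt measurable_const measurable_fst).inter
          (measurableSet_lt measurable_fst (measurable_snd.add measurable_const))))
  · exact (measurableSet_lt measurable_const measurable_snd).inter
      ((measurableSet_le measurable_snd measurable_fst).inter
        (measurableSet_lt measurable_fst measurable_const))

lemma norm_le_one (p : ℝ × ℝ) : ‖sameOrientationWeight β₁ p‖ ≤ 1 := by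
  unfold sameOrientationWeight
  split_ifs <;> norm_num

lemma integrableOn {μ : Measure (ℝ × ℝ)} {s : Set (ℝ × ℝ)} (hs : μ s ≠ ⊤) :
    IntegrableOn (sameOrientationWeight β₁) s μ :=
  Measure.integrableOn_of_bounded hs measurable.aestronglyMeasurable
    (Filter.Eventually.of_forall norm_le_one)

lemma apply_eq_one {α β : ℝ} (hα : α < β₁) (hβ : -β₁ < β) (hβα : β ≤ α - β₁) :
    sameOrientationWeight β₁ (α, β) = 1 := by
  have hβ_le : β ≤ α := by linarith
  simp only [sameOrientationWeight]
  rw [if_neg (by rintro ⟨-, -, -, h⟩; linarith), if_pos ⟨hβ, hβ_le, hα⟩]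

lemma apply_eq_neg_one {α β : ℝ} (hα : 0 < α) (hβα : α - β₁ < β) (hβ : β < 0) :
    sameOrientationWeight β₁ (α, β) = -1 := by
  have hβ_gt : -β₁ < β := by linarith
  simp only [sameOrientationWeight]
  rw [if_pos ⟨hβ_gt, hβ, hα, by linarith⟩]

lemma integral_slice {α : ℝ} (hα : α ∈ Ioo 0 β₁) :
    ∫ β in Icc (-β₁) 0, sameOrientationWeight β₁ (α, β) = 2 * α - β₁ := by
  obtain ⟨hα0, hαβ₁⟩ := hα
  rw [integral_Icc_eq_integral_Ioo,
    integral_Ioo_of_eqOn_const_of_eqOn_const (m := α - β₁) (c := 1) (d := -1)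
      (by linarith) (by linarith)
      (fun β hβ => apply_eq_one hαβ₁ hβ.1 hβ.2) (fun β hβ => apply_eq_neg_one hα0 hβ.1 hβ.2)]
  ring

end sameOrientationWeight

theorem same_orientation_crossover (β₁ : ℝ) (hβ₁ : 0 < β₁) :
    (∫ p in Set.Icc (0 : ℝ) β₁ ×ˢ Set.Icc (-β₁) (0 : ℝ),
      sameOrientationWeight β₁ p) = 0 := by
  have hrect : IntegrableOn (sameOrientationWeight β₁) (Icc 0 β₁ ×ˢ Icc (-β₁) 0)
      (volume.prod volume) :=
    sameOrientationWeight.integrableOn (isCompact_Icc.prod isCompact_Icc).measure_lt_top.ne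
  rw [Measure.volume_eq_prod, setIntegral_prod _ hrect, integral_Icc_eq_integral_Ioo,
    setIntegral_congr_fun measurableSet_Ioo fun _ => sameOrientationWeight.integral_slice,
    ← integral_Ioc_eq_integral_Ioo, ← intervalIntegral.integral_of_le hβ₁.le,
    intervalIntegral.integral_sub (intervalIntegral.intervalIntegrable_id.const_mul 2)
      intervalIntegrable_const, intervalIntegral.integral_const_mul, integral_id,
    intervalIntegral.integral_const]
  simp only [smul_eq_mul]
  ring
end

section
/- For every a ∈ {−1/2, 0, 1/2}, the double integral ∬_{[a,1]×[−1,a]} ( sin(2π(α − β)) + sin(2π(α + β)) ) dα dβ = 0, where α ranges over [a,1] and β over [−1,a]. Hence the Preisach operator whose weighting function equals μ(α,β) = sin(2π(α−β)) + sin(2π(α+β)) on {(α,β) : −1 < β < 1, β < α < 1} (and 0 elsewhere) produces, under a periodic input with minimum −1 and maximum 1, a hysteresis loop with crossover points at input values −1/2, 0 and 1/2. -/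
/-!
STATEMENT 13: For every a ∈ {−1/2, 0, 1/2},
∬_{[a,1]×[−1,a]} ( sin(2π(α−β)) + sin(2π(α+β)) ) dα dβ = 0; hence the Preisach
operator with weighting μ(α,β) = sin(2π(α−β)) + sin(2π(α+β)) on
{−1 < β < 1, β < α < 1} produces, under a periodic input with minimum −1 and
maximum 1, a hysteresis loop with crossover points at input values −1/2, 0, 1/2.
-/

open MeasureTheory Real

theorem multiloop_crossover_points :
    ∀ a ∈ ({-1/2, 0, 1/2} : Set ℝ),
      (∫ p in Set.Icc a (1 : ℝ) ×ˢ Set.Icc (-1 : ℝ) a,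
        (Real.sin (2 * Real.pi * (p.1 - p.2)) +
          Real.sin (2 * Real.pi * (p.1 + p.2)))) = 0 := by
  have key : ∀ a : ℝ, -1 ≤ a → Real.sin (2 * Real.pi * a) = 0 →
      (∫ p in Set.Icc a (1 : ℝ) ×ˢ Set.Icc (-1 : ℝ) a,
        (Real.sin (2 * Real.pi * (p.1 - p.2)) +
          Real.sin (2 * Real.pi * (p.1 + p.2)))) = 0 := by
    intro a ha' ha
    have hprod : (∫ p in Set.Icc a (1 : ℝ) ×ˢ Set.Icc (-1 : ℝ) a,
        (Real.sin (2 * Real.pi * (p.1 - p.2)) +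
          Real.sin (2 * Real.pi * (p.1 + p.2))))
        = ∫ p in Set.Icc a (1 : ℝ) ×ˢ Set.Icc (-1 : ℝ) a,
            (fun α => 2 * Real.sin (2*Real.pi*α)) p.1 *
            (fun β => Real.cos (2*Real.pi*β)) p.2 := by
      apply setIntegral_congr_fun (by measurability)
      intro p _
      simp only
      rw [mul_sub, mul_add, Real.sin_sub, Real.sin_add]
      ring
    rw [hprod, Measure.volume_eq_prod]
    rw [MeasureTheory.setIntegral_prod_mul (f := fun α => 2 * Real.sin (2*Real.pi*α))
      (g := fun β => Real.cos (2*Real.pi*β))]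
    have hcos : (∫ x in Set.Icc (-1:ℝ) a, Real.cos (2*Real.pi*x)) = 0 := by
      have h2 : ∫ x in Set.Icc (-1:ℝ) a, Real.cos (2*Real.pi*x)
          = ∫ x in (-1:ℝ)..a, Real.cos (2*Real.pi*x) := by
        rw [intervalIntegral.integral_of_le ha', MeasureTheory.integral_Icc_eq_integral_Ioc]
      rw [h2, intervalIntegral.integral_comp_mul_left (fun x => Real.cos x)
        (c := 2*Real.pi), integral_cos]
      rw [show 2 * Real.pi * (-1 : ℝ) = -(2*Real.pi) by ring, Real.sin_neg,
        Real.sin_two_pi, ha]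
      · simp
      · positivity
    rw [hcos, mul_zero]
  rintro a (rfl | rfl | rfl) <;> refine key _ (by norm_num) ?_
  · rw [show 2 * Real.pi * (-1/2 : ℝ) = -Real.pi by ring, Real.sin_neg, Real.sin_pi, neg_zero]
  · rw [show 2 * Real.pi * (0 : ℝ) = 0 by ring, Real.sin_zero]
  · rw [show 2 * Real.pi * (1/2 : ℝ) = Real.pi by ring, Real.sin_pi]
end

section
/- For every a ∈ {−3/4, −1/4, 1/4, 3/4}, the double integral ∬_{[a,1]×[−1,a]} ( sin(2π(α − β)) + sin(2π(α + β)) ) dα dβ ≠ 0, where α ranges over [a,1] and β over [−1,a]. Hence, for the Preisach operator whose weighting function equals μ(α,β) = sin(2π(α−β)) + sin(2π(α+β)) on {(α,β) : −1 < β < 1, β < α < 1} (and 0 elsewhere), the ascending and descending branches of the major hysteresis loop with input range [−1,1] do not meet at the input values −3/4, −1/4, 1/4 and 3/4, so the crossover points at −1/2, 0 and 1/2 give three distinct interior crossover components and the loop is composed of four subloops. -/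
/-!
STATEMENT 14: For every a ∈ {−3/4, −1/4, 1/4, 3/4},
∬_{[a,1]×[−1,a]} ( sin(2π(α−β)) + sin(2π(α+β)) ) dα dβ ≠ 0; hence the
ascending and descending branches of the major hysteresis loop (input range
[−1,1]) of the Preisach operator with this weighting do not meet at these
input values, so the crossover points at −1/2, 0, 1/2 give three distinct
interior crossover components and the loop is composed of four subloops.
-/

open MeasureTheory Real

lemma multiloop_key (a : ℝ) (h1 : a ≤ 1) (h2 : -1 ≤ a) :
    (∫ p in Set.Icc a (1:ℝ) ×ˢ Set.Icc (-1:ℝ) a,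
      (Real.sin (2 * Real.pi * (p.1 - p.2)) + Real.sin (2 * Real.pi * (p.1 + p.2))))
    = 2 * ((2*π)⁻¹ * (cos (2*π*a) - cos (2*π*1)))
        * ((2*π)⁻¹ * (sin (2*π*a) - sin (2*π*(-1)))) := by
  have hπ : (2*π : ℝ) ≠ 0 := by positivity
  have hfg : ∀ p : ℝ×ℝ, sin (2*π*(p.1-p.2)) + sin (2*π*(p.1+p.2))
      = (2*sin (2*π*p.1)) * cos (2*π*p.2) := by
    intro p; rw [mul_sub, mul_add, sin_sub, sin_add]; ring
  simp_rw [hfg]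
  rw [MeasureTheory.Measure.volume_eq_prod,
    MeasureTheory.setIntegral_prod_mul (fun x => 2 * sin (2*π*x)) (fun y => cos (2*π*y))]
  rw [integral_Icc_eq_integral_Ioc, integral_Icc_eq_integral_Ioc,
    ← intervalIntegral.integral_of_le h1, ← intervalIntegral.integral_of_le h2]
  rw [intervalIntegral.integral_const_mul, intervalIntegral.integral_comp_mul_left sin hπ,
    intervalIntegral.integral_comp_mul_left cos hπ]
  rw [integral_sin, integral_cos]
  simp [smul_eq_mul]

theorem multiloop_noncrossover_points :
    ∀ a ∈ ({-3/4, -1/4, 1/4, 3/4} : Set ℝ),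
      (∫ p in Set.Icc a (1 : ℝ) ×ˢ Set.Icc (-1 : ℝ) a,
        (Real.sin (2 * Real.pi * (p.1 - p.2)) +
          Real.sin (2 * Real.pi * (p.1 + p.2)))) ≠ 0 := by
  have hπ : (π : ℝ) ≠ 0 := pi_ne_zero
  intro a ha
  rcases ha with rfl | rfl | rfl | rfl
  · rw [multiloop_key _ (by norm_num) (by norm_num)]
    have e : 2*π*(-3/4 : ℝ) = -(π + π/2) := by ring
    have e1 : 2*π*(1:ℝ) = 2*π := by ring
    have e2 : 2*π*(-1:ℝ) = -(2*π) := by ring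
    rw [e, e1, e2]
    simp [cos_add, sin_add, cos_two_pi, sin_two_pi]
  · rw [multiloop_key _ (by norm_num) (by norm_num)]
    have e : 2*π*(-1/4 : ℝ) = -(π/2) := by ring
    have e1 : 2*π*(1:ℝ) = 2*π := by ring
    have e2 : 2*π*(-1:ℝ) = -(2*π) := by ring
    rw [e, e1, e2]
    simp [cos_two_pi, sin_two_pi]
  · rw [multiloop_key _ (by norm_num) (by norm_num)]
    have e : 2*π*(1/4 : ℝ) = π/2 := by ring
    have e1 : 2*π*(1:ℝ) = 2*π := by ring
    have e2 : 2*π*(-1:ℝ) = -(2*π) := by ring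
    rw [e, e1, e2]
    simp [cos_two_pi, sin_two_pi]
  · rw [multiloop_key _ (by norm_num) (by norm_num)]
    have e : 2*π*(3/4 : ℝ) = π + π/2 := by ring
    have e1 : 2*π*(1:ℝ) = 2*π := by ring
    have e2 : 2*π*(-1:ℝ) = -(2*π) := by ring
    rw [e, e1, e2]
    simp [cos_add, sin_add, cos_two_pi, sin_two_pi]
end
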